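/- arXiv:2112.04080 — 4 statements merged into one kernel-verified Lean document; each statement's English description precedes it below -/
import Mathlib

section
/- Let T : D → Y be continuously Fréchet differentiable, x* ∈ D with T(x*) = 0 and T'(x*) invertible, and assume ‖T'(x*)⁻¹(T'(x) − T'(x*))‖ ≤ ψ₀‖x − x*‖ for all x ∈ D. If ϱ < 2/ψ₀, the closed ball B̄(x*, ϱ) ⊆ D, and y* ∈ B̄(x*, ϱ) satisfies T(y*) = 0, then y* = x*. -/
/-! Put `v = y* - x*` and `F = T'(x*)⁻¹ ∘ T`. A centered Lipschitz bound on `F'` gives the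
quadratic Taylor estimate `‖F y* - F x* - v‖ ≤ ψ₀ ‖v‖² / 2`, and `F x* = F y* = 0` turns it into
`‖v‖ ≤ ψ₀ ‖v‖² / 2`. So either `v = 0` or `‖v‖ ≥ 2 / ψ₀ > ϱ`, contradicting `y* ∈ B̄(x*, ϱ)`. -/

open Set

section TaylorBound

variable {E F : Type*} [NormedAddCommGroup E] [NormedSpace ℝ E]
  [NormedAddCommGroup F] [NormedSpace ℝ F]

theorem norm_image_sub_sub_fderiv_le_of_centered_lipschitz {f : E → F} {f' : E → E →L[ℝ] F}
    {a b : E} {C : ℝ} (hf : ∀ x ∈ segment ℝ a b, HasFDerivAt f (f' x) x)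
    (hC : ∀ x ∈ segment ℝ a b, ‖f' x - f' a‖ ≤ C * ‖x - a‖) :
    ‖f b - f a - f' a (b - a)‖ ≤ C * ‖b - a‖ ^ 2 / 2 := by
  set v := b - a
  set γ : ℝ → E := fun t => a + t • v
  have hγ_mem : ∀ t ∈ Icc (0 : ℝ) 1, γ t ∈ segment ℝ a b := fun t ht => by
    rw [segment_eq_image']; exact ⟨t, ht, rfl⟩
  set g : ℝ → F := fun t => f (γ t) - f a - t • f' a v
  have hg : ∀ t ∈ Icc (0 : ℝ) 1, HasDerivAt g ((f' (γ t) - f' a) v) t := by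
    intro t ht
    have hγ' : HasDerivAt γ v t := by
      simpa only [id, one_smul] using ((hasDerivAt_id t).smul_const v).const_add a
    have hfγ := (hf _ (hγ_mem t ht)).comp_hasDerivAt t hγ'
    exact ((hfγ.sub_const (f a)).sub ((hasDerivAt_id t).smul_const (f' a v))).congr_deriv
      (by simp)
  have hg_bound : ∀ t ∈ Ico (0 : ℝ) 1, ‖(f' (γ t) - f' a) v‖ ≤ C * ‖v‖ ^ 2 * t := by
    intro t ht
    calc ‖(f' (γ t) - f' a) v‖ ≤ ‖f' (γ t) - f' a‖ * ‖v‖ := ContinuousLinearMap.le_opNorm _ _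
      _ ≤ C * ‖γ t - a‖ * ‖v‖ := by gcongr; exact hC _ (hγ_mem t (Ico_subset_Icc_self ht))
      _ = C * ‖v‖ ^ 2 * t := by
        simp only [γ, add_sub_cancel_left, norm_smul, Real.norm_of_nonneg ht.1]; ring
  have hB : ∀ t, HasDerivAt (fun t => C * ‖v‖ ^ 2 * t ^ 2 / 2) (C * ‖v‖ ^ 2 * t) t := fun t =>
    (((hasDerivAt_pow 2 t).const_mul (C * ‖v‖ ^ 2)).div_const 2).congr_deriv (by ring)
  have key := image_norm_le_of_norm_deriv_right_le_deriv_boundary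
    (fun t ht => (hg t ht).continuousAt.continuousWithinAt)
    (fun t ht => (hg t (Ico_subset_Icc_self ht)).hasDerivWithinAt)
    (by simp [g, γ]) hB hg_bound (right_mem_Icc.2 zero_le_one)
  simpa only [g, γ, v, one_smul, add_sub_cancel, one_pow, mul_one] using key

end TaylorBound

theorem stmt_8_general {X Y : Type*} [NormedAddCommGroup X] [NormedSpace ℝ X]
    [NormedAddCommGroup Y] [NormedSpace ℝ Y]
    (D : Set X)
    (T : X → Y) (T' : X → X →L[ℝ] Y) (hT : ∀ x ∈ D, HasFDerivAt T (T' x) x)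
    (xs : X) (hTxs : T xs = 0)
    (A : X ≃L[ℝ] Y) (hA : (A : X →L[ℝ] Y) = T' xs)
    (ψ₀ : ℝ) (hψ₀ : 0 < ψ₀)
    (hL : ∀ x ∈ D,
      ‖(A.symm : Y →L[ℝ] X).comp (T' x - T' xs)‖ ≤ ψ₀ * ‖x - xs‖)
    (ϱ : ℝ) (hϱ : ϱ < 2 / ψ₀) (hball : Metric.closedBall xs ϱ ⊆ D)
    (ys : X) (hys : ys ∈ Metric.closedBall xs ϱ) (hTys : T ys = 0) :
    ys = xs := by
  have hseg : segment ℝ xs ys ⊆ D := fun x hx => hball <|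
    (convex_closedBall xs ϱ).segment_subset (Metric.mem_closedBall_self
      (dist_nonneg.trans hys)) hys hx
  have htaylor := norm_image_sub_sub_fderiv_le_of_centered_lipschitz
    (f := fun x => A.symm (T x)) (f' := fun x => (A.symm : Y →L[ℝ] X).comp (T' x))
    (fun x hx => (A.symm : Y →L[ℝ] X).hasFDerivAt.comp x (hT x (hseg hx)))
    (fun x hx => by rw [← ContinuousLinearMap.comp_sub]; exact hL x (hseg hx))
  simp only [hTxs, hTys, map_zero, sub_zero, zero_sub, norm_neg, ← hA,
    ContinuousLinearMap.comp_apply, ContinuousLinearEquiv.coe_coe,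
    ContinuousLinearEquiv.symm_apply_apply] at htaylor
  have hdist : ‖ys - xs‖ ≤ ϱ := by rwa [← dist_eq_norm]
  have hϱψ : ψ₀ * ϱ < 2 := by rwa [lt_div_iff₀ hψ₀, mul_comm] at hϱ
  by_contra hne
  have hpos : 0 < ‖ys - xs‖ := norm_pos_iff.2 (sub_ne_zero.2 hne)
  have hψv : 2 ≤ ψ₀ * ‖ys - xs‖ := by nlinarith
  nlinarith [mul_le_mul_of_nonneg_left hdist hψ₀.le]

theorem stmt_8 {X Y : Type*} [NormedAddCommGroup X] [NormedSpace ℝ X] [CompleteSpace X]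
    [NormedAddCommGroup Y] [NormedSpace ℝ Y] [CompleteSpace Y]
    (D : Set X) (hD : IsOpen D) (hDc : Convex ℝ D)
    (T : X → Y) (T' : X → X →L[ℝ] Y) (hT : ∀ x ∈ D, HasFDerivAt T (T' x) x)
    (hT'c : ContinuousOn T' D)
    (xs : X) (hxs : xs ∈ D) (hTxs : T xs = 0)
    (A : X ≃L[ℝ] Y) (hA : (A : X →L[ℝ] Y) = T' xs)
    (ψ₀ : ℝ) (hψ₀ : 0 < ψ₀)
    (hL : ∀ x ∈ D,
      ‖(A.symm : Y →L[ℝ] X).comp (T' x - T' xs)‖ ≤ ψ₀ * ‖x - xs‖)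
    (ϱ : ℝ) (hϱ : ϱ < 2 / ψ₀) (hball : Metric.closedBall xs ϱ ⊆ D)
    (ys : X) (hys : ys ∈ Metric.closedBall xs ϱ) (hTys : T ys = 0) :
    ys = xs :=
  stmt_8_general D T T' hT xs hTxs A hA ψ₀ hψ₀ hL ϱ hϱ hball ys hys hTys
end

section
/- Under the centered Hölder condition ‖T'(x*)⁻¹(T'(x) − T'(x*))‖ ≤ κ₀‖x − x*‖^q with κ₀ > 0, q ∈ (0,1], T(x*) = 0, if ϱ^q < (q+1)/κ₀, B̄(x*, ϱ) ⊆ D, and y* ∈ B̄(x*, ϱ) with T(y*) = 0, then y* = x*. -/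
/-!
Along the segment from `x*` to `y*` the Hölder condition gives the Taylor estimate
`‖y* - x* - T'(x*)⁻¹ (T y* - T x*)‖ ≤ κ₀ / (q + 1) * ‖y* - x*‖ ^ (q + 1)`.
If both points are zeros of `T`, the left side is `‖y* - x*‖`, while the right side is at most
`κ₀ ϱ^q / (q + 1) < 1` times `‖y* - x*‖`; hence `y* = x*`.
-/

open Set

lemma hasDerivAt_div_mul_rpow_add_one {q : ℝ} (hq : 0 ≤ q) (c t : ℝ) :
    HasDerivAt (fun t => c / (q + 1) * t ^ (q + 1)) (c * t ^ q) t := by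
  have hq1 : q + 1 ≠ 0 := by positivity
  refine ((Real.hasDerivAt_rpow_const (x := t) (p := q + 1) (Or.inr (by linarith))).const_mul
    (c / (q + 1))).congr_deriv ?_
  rw [add_sub_cancel_right, ← mul_assoc, div_mul_cancel₀ c hq1]

section HolderTaylor

variable {E F : Type*} [NormedAddCommGroup E] [NormedSpace ℝ E]
  [NormedAddCommGroup F] [NormedSpace ℝ F]

theorem norm_image_sub_sub_fderiv_le_of_holder_at {f : E → F} {f' : E → E →L[ℝ] F}
    {x y : E} {κ q : ℝ} (hq : 0 ≤ q)
    (hf : ∀ z ∈ segment ℝ x y, HasFDerivAt f (f' z) z)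
    (hH : ∀ z ∈ segment ℝ x y, ‖f' z - f' x‖ ≤ κ * ‖z - x‖ ^ q) :
    ‖f y - f x - f' x (y - x)‖ ≤ κ / (q + 1) * ‖y - x‖ ^ (q + 1) := by
  set v := y - x
  set γ : ℝ → E := fun t => x + t • v
  have hγ_mem : ∀ t ∈ Icc (0 : ℝ) 1, γ t ∈ segment ℝ x y := fun t ht => by
    rw [segment_eq_image']; exact ⟨t, ht, rfl⟩
  have hγ_norm : ∀ t ∈ Icc (0 : ℝ) 1, ‖γ t - x‖ = t * ‖v‖ := fun t ht => by
    simp [γ, norm_smul, abs_of_nonneg ht.1]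
  set g : ℝ → F := fun t => f (γ t) - f x - t • f' x v
  have hg : ∀ t ∈ Icc (0 : ℝ) 1, HasDerivAt g ((f' (γ t) - f' x) v) t := fun t ht => by
    have hγ : HasDerivAt γ v t := by
      simpa [γ] using ((hasDerivAt_id t).smul_const v).const_add x
    refine ((((hf _ (hγ_mem t ht)).comp_hasDerivAt t hγ).sub_const (f x)).sub
      ((hasDerivAt_id' t).smul_const (f' x v))).congr_deriv ?_
    simp
  have hbound : ∀ t ∈ Ico (0 : ℝ) 1, ‖(f' (γ t) - f' x) v‖ ≤ κ * ‖v‖ ^ (q + 1) * t ^ q := by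
    intro t ht
    have ht' : t ∈ Icc (0 : ℝ) 1 := Ico_subset_Icc_self ht
    calc ‖(f' (γ t) - f' x) v‖ ≤ κ * ‖γ t - x‖ ^ q * ‖v‖ :=
          ((f' (γ t) - f' x).le_opNorm v).trans
            (mul_le_mul_of_nonneg_right (hH _ (hγ_mem t ht')) (norm_nonneg v))
      _ = κ * ‖v‖ ^ (q + 1) * t ^ q := by
          rw [hγ_norm t ht', Real.mul_rpow ht.1 (norm_nonneg v),
            Real.rpow_add_one' (norm_nonneg v) (by positivity)]
          ring
  have hg0 : ‖g 0‖ ≤ κ * ‖v‖ ^ (q + 1) / (q + 1) * 0 ^ (q + 1) := by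
    simp [g, γ, Real.zero_rpow (by positivity : q + 1 ≠ 0)]
  have hg1 := image_norm_le_of_norm_deriv_right_le_deriv_boundary
    (fun t ht => (hg t ht).continuousAt.continuousWithinAt)
    (fun t ht => (hg t (Ico_subset_Icc_self ht)).hasDerivWithinAt)
    hg0 (hasDerivAt_div_mul_rpow_add_one hq _) hbound (right_mem_Icc.2 zero_le_one)
  simpa [g, γ, v, mul_div_right_comm] using hg1

end HolderTaylor

lemma eq_zero_of_le_mul_rpow_add_one {r a q : ℝ} (hr : 0 ≤ r) (h : r ≤ a * r ^ (q + 1))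
    (ha : a * r ^ q < 1) : r = 0 := by
  by_contra hr0
  have hpos : 0 < r := lt_of_le_of_ne hr (Ne.symm hr0)
  rw [Real.rpow_add_one hr0, ← mul_assoc] at h
  nlinarith

theorem stmt_9_general {X Y : Type*} [NormedAddCommGroup X] [NormedSpace ℝ X]
    [NormedAddCommGroup Y] [NormedSpace ℝ Y]
    (D : Set X)
    (T : X → Y) (T' : X → X →L[ℝ] Y) (hT : ∀ x ∈ D, HasFDerivAt T (T' x) x)
    (xs : X) (hTxs : T xs = 0)
    (A : X ≃L[ℝ] Y) (hA : (A : X →L[ℝ] Y) = T' xs)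
    (κ₀ q : ℝ) (hκ₀ : 0 < κ₀) (hq : 0 < q)
    (hH : ∀ x ∈ D,
      ‖(A.symm : Y →L[ℝ] X).comp (T' x - T' xs)‖ ≤ κ₀ * ‖x - xs‖ ^ q)
    (ϱ : ℝ) (hϱ0 : 0 ≤ ϱ) (hϱ : ϱ ^ q < (q + 1) / κ₀)
    (hball : Metric.closedBall xs ϱ ⊆ D)
    (ys : X) (hys : ys ∈ Metric.closedBall xs ϱ) (hTys : T ys = 0) :
    ys = xs := by
  set Ainv : Y →L[ℝ] X := (A.symm : Y →L[ℝ] X)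
  have hseg : segment ℝ xs ys ⊆ D := ((convex_closedBall xs ϱ).segment_subset
    (Metric.mem_closedBall_self hϱ0) hys).trans hball
  have hAinv : Ainv.comp (T' xs) = ContinuousLinearMap.id ℝ X := by
    rw [← hA]; exact A.coe_symm_comp_coe
  have htaylor := norm_image_sub_sub_fderiv_le_of_holder_at (f := fun x => Ainv (T x))
    (f' := fun x => Ainv.comp (T' x)) hq.le
    (fun z hz => Ainv.hasFDerivAt.comp z (hT z (hseg hz)))
    (fun z hz => by rw [← ContinuousLinearMap.comp_sub]; exact hH z (hseg hz))
  rw [hAinv, hTxs, hTys] at htaylor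
  have hle : ‖ys - xs‖ ≤ κ₀ / (q + 1) * ‖ys - xs‖ ^ (q + 1) := by
    simpa only [map_zero, sub_self, zero_sub, norm_neg, ContinuousLinearMap.id_apply] using htaylor
  have hdist : ‖ys - xs‖ ≤ ϱ := by rwa [← dist_eq_norm, ← Metric.mem_closedBall]
  have hsmall : κ₀ / (q + 1) * ‖ys - xs‖ ^ q < 1 := calc
    κ₀ / (q + 1) * ‖ys - xs‖ ^ q ≤ κ₀ / (q + 1) * ϱ ^ q := by gcongr
    _ < 1 := by
      rw [lt_div_iff₀ hκ₀] at hϱ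
      rw [div_mul_eq_mul_div, div_lt_one (by linarith)]
      linarith
  exact sub_eq_zero.1 (norm_eq_zero.1 (eq_zero_of_le_mul_rpow_add_one (norm_nonneg _) hle hsmall))

theorem stmt_9 {X Y : Type*} [NormedAddCommGroup X] [NormedSpace ℝ X] [CompleteSpace X]
    [NormedAddCommGroup Y] [NormedSpace ℝ Y] [CompleteSpace Y]
    (D : Set X) (hD : IsOpen D) (hDc : Convex ℝ D)
    (T : X → Y) (T' : X → X →L[ℝ] Y) (hT : ∀ x ∈ D, HasFDerivAt T (T' x) x)
    (hT'c : ContinuousOn T' D)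
    (xs : X) (hxs : xs ∈ D) (hTxs : T xs = 0)
    (A : X ≃L[ℝ] Y) (hA : (A : X →L[ℝ] Y) = T' xs)
    (κ₀ q : ℝ) (hκ₀ : 0 < κ₀) (hq : 0 < q) (hq1 : q ≤ 1)
    (hH : ∀ x ∈ D,
      ‖(A.symm : Y →L[ℝ] X).comp (T' x - T' xs)‖ ≤ κ₀ * ‖x - xs‖ ^ q)
    (ϱ : ℝ) (hϱ0 : 0 ≤ ϱ) (hϱ : ϱ ^ q < (q + 1) / κ₀)
    (hball : Metric.closedBall xs ϱ ⊆ D)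
    (ys : X) (hys : ys ∈ Metric.closedBall xs ϱ) (hTys : T ys = 0) :
    ys = xs :=
  stmt_9_general D T T' hT xs hTxs A hA κ₀ q hκ₀ hq hH ϱ hϱ0 hϱ hball ys hys hTys
end

section
/- Let T be continuously Fréchet differentiable with T(x*) = 0, T'(x*) invertible, centered Lipschitz condition ‖T'(x*)⁻¹(T'(x) − T'(x*))‖ ≤ ψ₀‖x − x*‖ and Lipschitz condition ‖T'(x*)⁻¹(T'(x) − T'(y))‖ ≤ ψ‖x − y‖ on D with ψ₀ ≤ ψ. For x₀ ∈ D with ‖x₀ − x*‖ < 1/ψ₀, setting y₀ = x₀ − (1/2) T'(x₀)⁻¹ T(x₀), one has ‖y₀ − x*‖ ≤ η₁(‖x₀ − x*‖)‖x₀ − x*‖, where η₁(a) = (ψa/2 + (1 + ψ₀ a/2)/2)/(1 − ψ₀ a). -/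
/-!
Precondition by `A⁻¹ = T'(x*)⁻¹` and write `e = x₀ - x*`, `g = A⁻¹ ∘ T`, `M = A⁻¹ T'(x₀)`.
Comparing with a quadratic along the segment `[x*, x₀]`, the Lipschitz bounds give the two
Taylor estimates `‖g x₀ - M e‖ ≤ ψ ‖e‖² / 2` and `‖g x₀ - e‖ ≤ ψ₀ ‖e‖² / 2`. Since `‖M - 1‖ ≤ ψ₀ ‖e‖ < 1`,
we have `‖y₀ - x*‖ ≤ ‖M (y₀ - x*)‖ / (1 - ψ₀ ‖e‖)`, and `M (y₀ - x*) = M e - g x₀ / 2` is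
bounded by the two estimates.
-/

section TaylorEstimate

variable {E F : Type*} [NormedAddCommGroup E] [NormedSpace ℝ E]
  [NormedAddCommGroup F] [NormedSpace ℝ F] {f : E → F} {f' : E → E →L[ℝ] F} {a b : E} {K : ℝ}

theorem norm_image_sub_sub_fderiv_right_le
    (hf : ∀ x ∈ segment ℝ a b, HasFDerivAt f (f' x) x)
    (hK : ∀ x ∈ segment ℝ a b, ‖f' x - f' b‖ ≤ K * ‖x - b‖) :
    ‖f b - f a - f' b (b - a)‖ ≤ K / 2 * ‖b - a‖ ^ 2 := by
  set p : ℝ → E := fun t => a + t • (b - a)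
  have hp : ∀ t ∈ Set.Icc (0 : ℝ) 1, p t ∈ segment ℝ a b := fun t ht => by
    rw [segment_eq_image']; exact ⟨t, ht, rfl⟩
  have hp_sub : ∀ t, p t - b = (t - 1) • (b - a) := fun t => by simp only [p]; module
  set φ : ℝ → F := fun t => f (p t) - f a - t • f' b (b - a)
  have hφ : ∀ t ∈ Set.Icc (0 : ℝ) 1, HasDerivAt φ ((f' (p t) - f' b) (b - a)) t := by
    intro t ht
    have hpt : HasDerivAt p (b - a) t := by
      simpa only [one_smul] using ((hasDerivAt_id' t).smul_const (b - a)).const_add a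
    have := (((hf _ (hp t ht)).comp_hasDerivAt t hpt).sub_const (f a)).sub
      ((hasDerivAt_id' t).smul_const (f' b (b - a)))
    rwa [one_smul] at this
  have hφ_le : ∀ t ∈ Set.Icc (0 : ℝ) 1,
      ‖(f' (p t) - f' b) (b - a)‖ ≤ K * ‖b - a‖ ^ 2 * (1 - t) := by
    intro t ht
    calc ‖(f' (p t) - f' b) (b - a)‖ ≤ ‖f' (p t) - f' b‖ * ‖b - a‖ := (f' (p t) - f' b).le_opNorm _
      _ ≤ K * ‖p t - b‖ * ‖b - a‖ := by gcongr; exact hK _ (hp t ht)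
      _ = K * ‖b - a‖ ^ 2 * (1 - t) := by
        rw [hp_sub, norm_smul, Real.norm_of_nonpos (by linarith [ht.2])]; ring
  -- comparison function, worth `K ‖b - a‖² / 2` at `t = 1`
  have hbound : ∀ t, HasDerivAt (fun t : ℝ => K * ‖b - a‖ ^ 2 * (t - t ^ 2 / 2))
      (K * ‖b - a‖ ^ 2 * (1 - t)) t := fun t => by
    simpa using (((hasDerivAt_id t).sub ((hasDerivAt_pow 2 t).div_const 2)).const_mul
      (K * ‖b - a‖ ^ 2))
  have := image_norm_le_of_norm_deriv_right_le_deriv_boundary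
    (fun t ht => (hφ t ht).continuousAt.continuousWithinAt)
    (fun t ht => (hφ t (Set.Ico_subset_Icc_self ht)).hasDerivWithinAt)
    (by simp [φ, p]) hbound (fun t ht => hφ_le t (Set.Ico_subset_Icc_self ht))
    (Set.right_mem_Icc.2 zero_le_one)
  convert this using 1
  · simp [φ, p]
  · ring

theorem norm_image_sub_sub_fderiv_left_le
    (hf : ∀ x ∈ segment ℝ a b, HasFDerivAt f (f' x) x)
    (hK : ∀ x ∈ segment ℝ a b, ‖f' x - f' a‖ ≤ K * ‖x - a‖) :
    ‖f b - f a - f' a (b - a)‖ ≤ K / 2 * ‖b - a‖ ^ 2 := by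
  rw [segment_symm] at hf hK
  have hneg : f b - f a - f' a (b - a) = -(f a - f b - f' a (a - b)) := by
    rw [← neg_sub b a, map_neg]; abel
  rw [hneg, norm_neg, norm_sub_rev b a]
  exact norm_image_sub_sub_fderiv_right_le hf hK

end TaylorEstimate

section NearIdentity

variable {E : Type*} [NormedAddCommGroup E] [NormedSpace ℝ E] {M : E →L[ℝ] E} {q : ℝ}

theorem norm_le_div_of_norm_sub_one_le (hM : ‖M - 1‖ ≤ q) (hq : q < 1) (u : E) :
    ‖u‖ ≤ ‖M u‖ / (1 - q) := by
  rw [le_div_iff₀ (sub_pos.2 hq)]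
  have : ‖u‖ ≤ ‖M u‖ + q * ‖u‖ :=
    calc ‖u‖ = ‖M u - (M - 1) u‖ := by simp
      _ ≤ ‖M u‖ + ‖M - 1‖ * ‖u‖ := (norm_sub_le _ _).trans (by gcongr; exact (M - 1).le_opNorm u)
      _ ≤ ‖M u‖ + q * ‖u‖ := by gcongr
  linarith

theorem norm_le_of_apply_eq_sub_half_smul {u e g : E} {α β : ℝ}
    (hMu : M u = M e - (1 / 2 : ℝ) • g) (hM : ‖M - 1‖ ≤ q) (hq : q < 1)
    (hα : ‖g - M e‖ ≤ α) (hβ : ‖g - e‖ ≤ β) :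
    ‖u‖ ≤ (α + (‖e‖ + β) / 2) / (1 - q) := by
  refine (norm_le_div_of_norm_sub_one_le hM hq u).trans
    (div_le_div_of_nonneg_right ?_ (sub_pos.2 hq).le)
  have hg : ‖g‖ ≤ ‖e‖ + β := by linarith [norm_sub_norm_le g e]
  calc ‖M u‖ ≤ ‖g - M e‖ + 1 / 2 * ‖g‖ := by
        rw [hMu, show M e - (1 / 2 : ℝ) • g = -(g - M e) + (1 / 2 : ℝ) • g by module]
        refine (norm_add_le _ _).trans_eq ?_
        rw [norm_neg, norm_smul, Real.norm_of_nonneg (by norm_num)]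
    _ ≤ α + (‖e‖ + β) / 2 := by linarith

end NearIdentity

theorem stmt_12_general {X Y : Type*} [NormedAddCommGroup X] [NormedSpace ℝ X]
    [NormedAddCommGroup Y] [NormedSpace ℝ Y]
    (D : Set X)
    (T : X → Y) (T' : X → X →L[ℝ] Y) (hT : ∀ x ∈ D, HasFDerivAt T (T' x) x)
    (xs : X) (hTxs : T xs = 0)
    (A : X ≃L[ℝ] Y) (hA : (A : X →L[ℝ] Y) = T' xs)
    (ψ₀ ψ : ℝ) (hψ₀ : 0 < ψ₀)
    (hL0 : ∀ x ∈ D,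
      ‖(A.symm : Y →L[ℝ] X).comp (T' x - T' xs)‖ ≤ ψ₀ * ‖x - xs‖)
    (hL : ∀ x ∈ D, ∀ y ∈ D,
      ‖(A.symm : Y →L[ℝ] X).comp (T' x - T' y)‖ ≤ ψ * ‖x - y‖)
    (x₀ : X) (hx₀ : x₀ ∈ D) (hseg : segment ℝ xs x₀ ⊆ D)
    (hx₀r : ‖x₀ - xs‖ < 1 / ψ₀)
    (B : X ≃L[ℝ] Y) (hB : (B : X →L[ℝ] Y) = T' x₀)
    (y₀ : X) (hy₀ : y₀ = x₀ - (1 / 2 : ℝ) • B.symm (T x₀)) :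
    ‖y₀ - xs‖ ≤
      ((ψ * ‖x₀ - xs‖ / 2 + (1 + ψ₀ * ‖x₀ - xs‖ / 2) / 2) / (1 - ψ₀ * ‖x₀ - xs‖)) *
        ‖x₀ - xs‖ := by
  set A' : Y →L[ℝ] X := (A.symm : Y →L[ℝ] X)
  set e := x₀ - xs
  have hA1 : A'.comp (T' xs) = 1 := by rw [← hA]; exact A.coe_symm_comp_coe
  have hg : ∀ x ∈ segment ℝ xs x₀, HasFDerivAt (fun x => A' (T x)) (A'.comp (T' x)) x :=
    fun x hx => A'.hasFDerivAt.comp x (hT x (hseg hx))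
  have htaylor : ‖A' (T x₀) - A'.comp (T' x₀) e‖ ≤ ψ / 2 * ‖e‖ ^ 2 := by
    simpa only [hTxs, map_zero, sub_zero] using norm_image_sub_sub_fderiv_right_le hg fun x hx => by
      rw [← ContinuousLinearMap.comp_sub]; exact hL x (hseg hx) x₀ hx₀
  have htaylor₀ : ‖A' (T x₀) - e‖ ≤ ψ₀ / 2 * ‖e‖ ^ 2 := by
    simpa only [hTxs, map_zero, sub_zero, hA1, one_apply_eq_self] using
      norm_image_sub_sub_fderiv_left_le hg fun x hx => by
        rw [← ContinuousLinearMap.comp_sub]; exact hL0 x (hseg hx)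
  have hM : ‖A'.comp (T' x₀) - 1‖ ≤ ψ₀ * ‖e‖ := by
    rw [← hA1, ← ContinuousLinearMap.comp_sub]; exact hL0 x₀ hx₀
  have hMu : A'.comp (T' x₀) (y₀ - xs) = A'.comp (T' x₀) e - (1 / 2 : ℝ) • A' (T x₀) := by
    have hu : y₀ - xs = e - (1 / 2 : ℝ) • B.symm (T x₀) := by rw [hy₀, sub_right_comm]
    simp only [hu, ContinuousLinearMap.comp_apply, ← hB, map_sub, map_smul,
      ContinuousLinearEquiv.coe_coe, B.apply_symm_apply]
  have hq : ψ₀ * ‖e‖ < 1 := by rwa [lt_div_iff₀' hψ₀] at hx₀r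
  convert norm_le_of_apply_eq_sub_half_smul hMu hM hq htaylor htaylor₀ using 1
  rw [div_mul_eq_mul_div]
  ring

theorem stmt_12 {X Y : Type*} [NormedAddCommGroup X] [NormedSpace ℝ X] [CompleteSpace X]
    [NormedAddCommGroup Y] [NormedSpace ℝ Y] [CompleteSpace Y]
    (D : Set X) (hD : IsOpen D) (hDc : Convex ℝ D)
    (T : X → Y) (T' : X → X →L[ℝ] Y) (hT : ∀ x ∈ D, HasFDerivAt T (T' x) x)
    (hT'c : ContinuousOn T' D)
    (xs : X) (hxs : xs ∈ D) (hTxs : T xs = 0)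
    (A : X ≃L[ℝ] Y) (hA : (A : X →L[ℝ] Y) = T' xs)
    (ψ₀ ψ : ℝ) (hψ₀ : 0 < ψ₀) (hψ : 0 < ψ) (hle : ψ₀ ≤ ψ)
    (hL0 : ∀ x ∈ D,
      ‖(A.symm : Y →L[ℝ] X).comp (T' x - T' xs)‖ ≤ ψ₀ * ‖x - xs‖)
    (hL : ∀ x ∈ D, ∀ y ∈ D,
      ‖(A.symm : Y →L[ℝ] X).comp (T' x - T' y)‖ ≤ ψ * ‖x - y‖)
    (x₀ : X) (hx₀ : x₀ ∈ D) (hseg : segment ℝ xs x₀ ⊆ D)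
    (hx₀r : ‖x₀ - xs‖ < 1 / ψ₀)
    (B : X ≃L[ℝ] Y) (hB : (B : X →L[ℝ] Y) = T' x₀)
    (y₀ : X) (hy₀ : y₀ = x₀ - (1 / 2 : ℝ) • B.symm (T x₀)) :
    ‖y₀ - xs‖ ≤
      ((ψ * ‖x₀ - xs‖ / 2 + (1 + ψ₀ * ‖x₀ - xs‖ / 2) / 2) / (1 - ψ₀ * ‖x₀ - xs‖)) *
        ‖x₀ - xs‖ :=
  stmt_12_general D T T' hT xs hTxs A hA ψ₀ ψ hψ₀ hL0 hL x₀ hx₀ hseg hx₀r B hB y₀ hy₀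
end

section
/- Let T be continuously Fréchet differentiable with T(x*) = 0, T'(x*) invertible, centered Hölder condition ‖T'(x*)⁻¹(T'(x) − T'(x*))‖ ≤ κ₀‖x − x*‖^q and Hölder condition ‖T'(x*)⁻¹(T'(x) − T'(y))‖ ≤ κ‖x − y‖^q on D, q ∈ (0,1], κ₀ ≤ κ. For x₀ ∈ D with κ₀‖x₀ − x*‖^q < 1, setting y₀ = x₀ − (1/2) T'(x₀)⁻¹ T(x₀), one has ‖y₀ − x*‖ ≤ μ₁(‖x₀ − x*‖)‖x₀ − x*‖, where μ₁(a) = (κ a^q/(q+1) + (1 + κ₀ a^q/(q+1))/2)/(1 − κ₀ a^q). -/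
/-!
Put `C = T'(x*)⁻¹`, `e = x₀ - x*` and `a = ‖e‖`. Along a segment, a Hölder bound
`‖f' z - L‖ ≤ c ‖z - x‖^q` on the derivative gives the Taylor estimate
`‖f y - f x - L (y - x)‖ ≤ c ‖y - x‖^(q+1) / (q+1)` (compare with the boundary `t ↦ t^(q+1)`).
Applied to `C ∘ T` from `x*` to `x₀` and from `x₀` to `x*`, it bounds the three pieces of
`C T'(x₀) (y₀ - x*) = (C T(x*) - C T(x₀) + C T'(x₀) e) + (C T(x₀) - e) / 2 + e / 2`,
while `‖C T'(x₀) - 1‖ ≤ κ₀ a^q < 1` gives `‖C T'(x₀) v‖ ≥ (1 - κ₀ a^q) ‖v‖`.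
-/

open Set

theorem norm_sub_le_of_norm_deriv_le_mul_rpow {E : Type*} [NormedAddCommGroup E]
    [NormedSpace ℝ E] {f f' : ℝ → E} {K q : ℝ} (hq : 0 ≤ q)
    (hf : ∀ t ∈ Icc (0 : ℝ) 1, HasDerivAt f (f' t) t)
    (bound : ∀ t ∈ Ico (0 : ℝ) 1, ‖f' t‖ ≤ K * t ^ q) :
    ‖f 1 - f 0‖ ≤ K / (q + 1) := by
  have hq1 : q + 1 ≠ 0 := by linarith
  have hB : ∀ t : ℝ, HasDerivAt (fun t => K / (q + 1) * t ^ (q + 1))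
      (K / (q + 1) * ((q + 1) * t ^ q)) t := fun t => by
    simpa using ((Real.hasDerivAt_rpow_const (p := q + 1) (Or.inr (by linarith))).const_mul
      (K / (q + 1)))
  have key := image_norm_le_of_norm_deriv_right_le_deriv_boundary (f := fun t => f t - f 0)
    (fun t ht => ((hf t ht).continuousAt.sub continuousAt_const).continuousWithinAt)
    (fun t ht => ((hf t (Ico_subset_Icc_self ht)).sub_const (f 0)).hasDerivWithinAt)
    (by simp [hq1]) hB
    (fun t ht => (bound t ht).trans_eq (by field_simp)) (right_mem_Icc.2 zero_le_one)
  simpa using key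

theorem norm_sub_sub_le_of_norm_fderiv_sub_le_mul_rpow {E F : Type*} [NormedAddCommGroup E]
    [NormedSpace ℝ E] [NormedAddCommGroup F] [NormedSpace ℝ F] {f : E → F}
    {f' : E → E →L[ℝ] F} {L : E →L[ℝ] F} {x y : E} {c q : ℝ} (hq : 0 ≤ q)
    (hf : ∀ z ∈ segment ℝ x y, HasFDerivAt f (f' z) z)
    (bound : ∀ z ∈ segment ℝ x y, ‖f' z - L‖ ≤ c * ‖z - x‖ ^ q) :
    ‖f y - f x - L (y - x)‖ ≤ c * ‖y - x‖ ^ q * ‖y - x‖ / (q + 1) := by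
  set d := y - x
  have hmem : ∀ t ∈ Icc (0 : ℝ) 1, x + t • d ∈ segment ℝ x y := fun t ht => by
    rw [segment_eq_image']
    exact mem_image_of_mem _ ht
  have hderiv : ∀ t ∈ Icc (0 : ℝ) 1, HasDerivAt (fun t : ℝ => f (x + t • d) - t • L d)
      ((f' (x + t • d) - L) d) t := fun t ht => by
    have hline : HasDerivAt (fun t : ℝ => x + t • d) d t := by
      simpa using ((hasDerivAt_id t).smul_const d).const_add x
    exact (((hf _ (hmem t ht)).comp_hasDerivAt t hline).sub
      ((hasDerivAt_id t).smul_const (L d))).congr_deriv (by simp)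
  have key := norm_sub_le_of_norm_deriv_le_mul_rpow hq hderiv fun t ht => by
    have ht' := Ico_subset_Icc_self ht
    calc ‖(f' (x + t • d) - L) d‖ ≤ ‖f' (x + t • d) - L‖ * ‖d‖ := (f' _ - L).le_opNorm d
      _ ≤ c * ‖x + t • d - x‖ ^ q * ‖d‖ := by gcongr; exact bound _ (hmem t ht')
      _ = c * ‖d‖ ^ q * ‖d‖ * t ^ q := by
        rw [add_sub_cancel_left, norm_smul, Real.norm_of_nonneg ht'.1, Real.mul_rpow ht'.1
          (norm_nonneg d)]
        ring
  simpa [d, sub_right_comm] using key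

theorem norm_comp_sub_sub_le_of_norm_comp_fderiv_sub_le_mul_rpow {E F G : Type*}
    [NormedAddCommGroup E] [NormedSpace ℝ E] [NormedAddCommGroup F] [NormedSpace ℝ F]
    [NormedAddCommGroup G] [NormedSpace ℝ G] {f : E → F} {f' : E → E →L[ℝ] F} {C : F →L[ℝ] G}
    {L : E →L[ℝ] F} {x y : E} {c q : ℝ} (hq : 0 ≤ q)
    (hf : ∀ z ∈ segment ℝ x y, HasFDerivAt f (f' z) z)
    (bound : ∀ z ∈ segment ℝ x y, ‖C.comp (f' z - L)‖ ≤ c * ‖z - x‖ ^ q) :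
    ‖C (f y) - C (f x) - C (L (y - x))‖ ≤ c * ‖y - x‖ ^ q * ‖y - x‖ / (q + 1) :=
  norm_sub_sub_le_of_norm_fderiv_sub_le_mul_rpow (f := fun z => C (f z)) (L := C.comp L) hq
    (fun z hz => C.hasFDerivAt.comp z (hf z hz))
    (fun z hz => by rw [← ContinuousLinearMap.comp_sub]; exact bound z hz)

theorem ContinuousLinearMap.one_sub_mul_norm_le_norm_apply {E : Type*} [NormedAddCommGroup E]
    [NormedSpace ℝ E] {P : E →L[ℝ] E} {r : ℝ} (h : ‖P - ContinuousLinearMap.id ℝ E‖ ≤ r)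
    (v : E) : (1 - r) * ‖v‖ ≤ ‖P v‖ := by
  have : ‖v - P v‖ ≤ r * ‖v‖ := by
    rw [← norm_neg, neg_sub]
    exact ((P - ContinuousLinearMap.id ℝ E).le_opNorm v).trans
      (mul_le_mul_of_nonneg_right h (norm_nonneg v))
  linarith [norm_le_norm_add_norm_sub' v (P v), norm_sub_rev (P v) v]

theorem stmt_13_general {X Y : Type*} [NormedAddCommGroup X] [NormedSpace ℝ X]
    [NormedAddCommGroup Y] [NormedSpace ℝ Y]
    (D : Set X)
    (T : X → Y) (T' : X → X →L[ℝ] Y) (hT : ∀ x ∈ D, HasFDerivAt T (T' x) x)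
    (xs : X) (hTxs : T xs = 0)
    (A : X ≃L[ℝ] Y) (hA : (A : X →L[ℝ] Y) = T' xs)
    (κ₀ κ q : ℝ)
    (hq : 0 < q)
    (hH0 : ∀ x ∈ D,
      ‖(A.symm : Y →L[ℝ] X).comp (T' x - T' xs)‖ ≤ κ₀ * ‖x - xs‖ ^ q)
    (hH : ∀ x ∈ D, ∀ y ∈ D,
      ‖(A.symm : Y →L[ℝ] X).comp (T' x - T' y)‖ ≤ κ * ‖x - y‖ ^ q)
    (x₀ : X) (hx₀ : x₀ ∈ D) (hseg : segment ℝ xs x₀ ⊆ D)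
    (hx₀r : κ₀ * ‖x₀ - xs‖ ^ q < 1)
    (B : X ≃L[ℝ] Y) (hB : (B : X →L[ℝ] Y) = T' x₀)
    (y₀ : X) (hy₀ : y₀ = x₀ - (1 / 2 : ℝ) • B.symm (T x₀)) :
    ‖y₀ - xs‖ ≤
      ((κ * ‖x₀ - xs‖ ^ q / (q + 1) + (1 + κ₀ * ‖x₀ - xs‖ ^ q / (q + 1)) / 2) /
          (1 - κ₀ * ‖x₀ - xs‖ ^ q)) * ‖x₀ - xs‖ := by
  set C := (A.symm : Y →L[ℝ] X)
  set a := ‖x₀ - xs‖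
  have hCA : C.comp (T' xs) = ContinuousLinearMap.id ℝ X := by rw [← hA]; exact A.coe_symm_comp_coe
  have hv := norm_comp_sub_sub_le_of_norm_comp_fderiv_sub_le_mul_rpow (C := C) (L := T' xs)
    hq.le (fun z hz => hT z (hseg hz)) (fun z hz => hH0 z (hseg hz))
  rw [segment_symm] at hseg
  have hu := norm_comp_sub_sub_le_of_norm_comp_fderiv_sub_le_mul_rpow (C := C) (L := T' x₀)
    hq.le (fun z hz => hT z (hseg hz)) (fun z hz => hH z (hseg hz) x₀ hx₀)
  rw [norm_sub_rev xs x₀] at hu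
  have hlow : (1 - κ₀ * a ^ q) * ‖y₀ - xs‖ ≤ ‖C (T' x₀ (y₀ - xs))‖ :=
    ContinuousLinearMap.one_sub_mul_norm_le_norm_apply (P := C.comp (T' x₀))
      (by rw [← hCA, ← ContinuousLinearMap.comp_sub]; exact hH0 x₀ hx₀) _
  have hsplit : C (T' x₀ (y₀ - xs)) = (C (T xs) - C (T x₀) - C (T' x₀ (xs - x₀)))
      + (1 / 2 : ℝ) • (C (T x₀) - C (T xs) - C (T' xs (x₀ - xs))) + (1 / 2 : ℝ) • (x₀ - xs) := by
    have hBT : T' x₀ (B.symm (T x₀)) = T x₀ := by rw [← hB]; exact B.apply_symm_apply _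
    have hCe : C (T' xs (x₀ - xs)) = x₀ - xs := by rw [← hA]; exact A.symm_apply_apply _
    rw [hy₀, hCe, hTxs, map_zero]
    simp only [map_sub, map_smul, hBT]
    module
  have hup : ‖C (T' x₀ (y₀ - xs))‖ ≤ κ * a ^ q * a / (q + 1)
      + 1 / 2 * (κ₀ * a ^ q * a / (q + 1)) + 1 / 2 * a := by
    rw [hsplit]
    refine (norm_add₃_le).trans ?_
    rw [norm_smul, norm_smul, Real.norm_of_nonneg (by norm_num)]
    gcongr
  rw [div_mul_eq_mul_div, le_div_iff₀ (by linarith)]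
  linarith [show (κ * a ^ q / (q + 1) + (1 + κ₀ * a ^ q / (q + 1)) / 2) * a
    = κ * a ^ q * a / (q + 1) + 1 / 2 * (κ₀ * a ^ q * a / (q + 1)) + 1 / 2 * a by ring]

theorem stmt_13 {X Y : Type*} [NormedAddCommGroup X] [NormedSpace ℝ X] [CompleteSpace X]
    [NormedAddCommGroup Y] [NormedSpace ℝ Y] [CompleteSpace Y]
    (D : Set X) (hD : IsOpen D) (hDc : Convex ℝ D)
    (T : X → Y) (T' : X → X →L[ℝ] Y) (hT : ∀ x ∈ D, HasFDerivAt T (T' x) x)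
    (hT'c : ContinuousOn T' D)
    (xs : X) (hxs : xs ∈ D) (hTxs : T xs = 0)
    (A : X ≃L[ℝ] Y) (hA : (A : X →L[ℝ] Y) = T' xs)
    (κ₀ κ q : ℝ) (hκ₀ : 0 < κ₀) (hκ : 0 < κ) (hle : κ₀ ≤ κ)
    (hq : 0 < q) (hq1 : q ≤ 1)
    (hH0 : ∀ x ∈ D,
      ‖(A.symm : Y →L[ℝ] X).comp (T' x - T' xs)‖ ≤ κ₀ * ‖x - xs‖ ^ q)
    (hH : ∀ x ∈ D, ∀ y ∈ D,
      ‖(A.symm : Y →L[ℝ] X).comp (T' x - T' y)‖ ≤ κ * ‖x - y‖ ^ q)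
    (x₀ : X) (hx₀ : x₀ ∈ D) (hseg : segment ℝ xs x₀ ⊆ D)
    (hx₀r : κ₀ * ‖x₀ - xs‖ ^ q < 1)
    (B : X ≃L[ℝ] Y) (hB : (B : X →L[ℝ] Y) = T' x₀)
    (y₀ : X) (hy₀ : y₀ = x₀ - (1 / 2 : ℝ) • B.symm (T x₀)) :
    ‖y₀ - xs‖ ≤
      ((κ * ‖x₀ - xs‖ ^ q / (q + 1) + (1 + κ₀ * ‖x₀ - xs‖ ^ q / (q + 1)) / 2) /
          (1 - κ₀ * ‖x₀ - xs‖ ^ q)) * ‖x₀ - xs‖ :=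
  stmt_13_general D T T' hT xs hTxs A hA κ₀ κ q hq hH0 hH x₀ hx₀ hseg hx₀r B hB y₀ hy₀
end
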